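/- arXiv:2205.13364 — 4 statements merged into one kernel-verified Lean document; each statement's English description precedes it below -/
import Mathlib

section
/- Let d ≥ 1 be an integer and σ > 0 a real number with σ d < 2. Then for every ε > 0 there exists a constant C_ε > 0 such that for every continuously differentiable function u : ℝ^d → ℂ with compact support, ‖u‖_{L^{2+2σ}}^{2+2σ} ≤ ε ‖∇u‖_{L²}² + C_ε ‖u‖_{L²}^{2 + 4σ/(2 − σd)}. -/
/-!
Since `σd < 2`, Young's inequality with exponents `2/(σd)` and `2/(2 - σd)` reduces the claim to
the Gagliardo–Nirenberg inequality `‖u‖_{2+2σ}^{2+2σ} ≤ K ‖∇u‖₂^{σd} ‖u‖₂^{2+2σ-σd}`.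
That inequality follows by Hölder interpolation of `L^{2+2σ}` between `L²` and an endpoint
controlled by `‖∇u‖₂`: for `d ≥ 3` the Sobolev exponent `2d/(d-2)`; for `d = 2` the exponent `4`,
where `‖u‖₄⁴ ≲ ‖u‖₂² ‖∇u‖₂²` is the `L¹` Sobolev inequality applied to `|u|²`; for `d = 1` the
exponent `∞`, where `|u(t)|² ≤ ∫ |(|u|²)'| ≤ 2 ‖u‖₂ ‖u'‖₂`.
-/

open MeasureTheory Module
open scoped ENNReal NNReal

theorem Real.exists_mul_rpow_mul_rpow_le_mul_sq_add {α β K ε : ℝ} (hα : 0 < α) (hα2 : α < 2)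
    (hK : 0 ≤ K) (hε : 0 < ε) :
    ∃ C > (0 : ℝ), ∀ a b : ℝ, 0 ≤ a → 0 ≤ b →
      K * a ^ α * b ^ β ≤ ε * a ^ (2 : ℝ) + C * b ^ (β * (2 / (2 - α))) := by
  set p := 2 / α
  set p' := 2 / (2 - α)
  have hpp' : p.HolderConjugate p' := by
    rw [Real.holderConjugate_iff]
    refine ⟨by rw [lt_div_iff₀ hα]; linarith, ?_⟩
    simp only [p, p', inv_div]
    ring
  -- Young's inequality for `(δ a^α) ((K / δ) b^β)`, with `δ` chosen so that `δ^p / p = ε`.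
  set δ := (ε * p) ^ p⁻¹
  have hδ : 0 < δ := by positivity
  have hδp : δ ^ p = ε * p := Real.rpow_inv_rpow (by positivity) hpp'.ne_zero
  refine ⟨(K / δ) ^ p' / p' + 1, by positivity, fun a b ha hb => ?_⟩
  calc K * a ^ α * b ^ β = δ * a ^ α * (K / δ * b ^ β) := by field_simp
    _ ≤ (δ * a ^ α) ^ p / p + (K / δ * b ^ β) ^ p' / p' :=
        Real.young_inequality_of_nonneg (by positivity) (by positivity) hpp'
    _ = ε * a ^ (2 : ℝ) + (K / δ) ^ p' / p' * b ^ (β * p') := by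
        rw [Real.mul_rpow hδ.le (by positivity), Real.mul_rpow (by positivity) (by positivity),
          ← Real.rpow_mul ha, ← Real.rpow_mul hb, hδp, show α * p = 2 by simp only [p]; field_simp]
        field_simp [hpp'.ne_zero]
    _ ≤ ε * a ^ (2 : ℝ) + ((K / δ) ^ p' / p' + 1) * b ^ (β * p') := by
        gcongr
        linarith

theorem ENNReal.lintegral_rpow_interpolate_le {X : Type*} [MeasurableSpace X] {μ : Measure X}
    {f : X → ℝ≥0∞} (hf : AEMeasurable f μ) {a b θ : ℝ} (ha : 0 ≤ a) (hb : 0 ≤ b)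
    (hθ₀ : 0 ≤ θ) (hθ₁ : θ ≤ 1) :
    ∫⁻ x, f x ^ (θ * a + (1 - θ) * b) ∂μ ≤
      (∫⁻ x, f x ^ a ∂μ) ^ θ * (∫⁻ x, f x ^ b ∂μ) ^ (1 - θ) := by
  calc ∫⁻ x, f x ^ (θ * a + (1 - θ) * b) ∂μ
      = ∫⁻ x, (f x ^ a) ^ θ * (f x ^ b) ^ (1 - θ) ∂μ := by
        refine lintegral_congr fun x => ?_
        rw [← ENNReal.rpow_mul, ← ENNReal.rpow_mul,
          ← ENNReal.rpow_add_of_nonneg _ _ (by positivity) (mul_nonneg hb (by linarith))]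
        ring_nf
    _ ≤ _ := ENNReal.lintegral_mul_norm_pow_le (hf.pow_const a) (hf.pow_const b) hθ₀
        (by linarith) (by ring)

theorem lintegral_enorm_rpow_eq_eLpNorm_rpow {X G : Type*} [MeasurableSpace X] {μ : Measure X}
    [NormedAddCommGroup G] {f : X → G} {p : ℝ} (hp : 0 < p) :
    ∫⁻ x, ‖f x‖ₑ ^ p ∂μ = eLpNorm f (ENNReal.ofReal p) μ ^ p := by
  rw [eLpNorm_eq_eLpNorm' (by simpa using hp) ENNReal.ofReal_ne_top, ENNReal.toReal_ofReal hp.le,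
    lintegral_rpow_enorm_eq_rpow_eLpNorm' hp]

section NormedSpace

variable {E F : Type*} [NormedAddCommGroup E] [NormedSpace ℝ E] [MeasurableSpace E]
  [NormedAddCommGroup F] [NormedSpace ℝ F]

variable (F) in
/-- `‖u‖_q^q ≤ K ‖∇u‖₂^α ‖u‖₂^(q-α)`, with every norm raised to its own exponent so that it
becomes a lintegral. -/
def GagliardoNirenbergBound (μ : Measure E) (q α : ℝ) (K : ℝ≥0∞) : Prop :=
  ∀ u : E → F, ContDiff ℝ 1 u → HasCompactSupport u →
    ∫⁻ x, ‖u x‖ₑ ^ q ∂μ ≤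
      K * (∫⁻ x, ‖fderiv ℝ u x‖ₑ ^ (2 : ℝ) ∂μ) ^ (α / 2) *
        (∫⁻ x, ‖u x‖ₑ ^ (2 : ℝ) ∂μ) ^ ((q - α) / 2)

theorem GagliardoNirenbergBound.map_linearIsometryEquiv {E' : Type*} [NormedAddCommGroup E']
    [NormedSpace ℝ E'] [MeasurableSpace E'] [BorelSpace E] [BorelSpace E']
    {μ : Measure E} {μ' : Measure E'} {q α : ℝ} {K : ℝ≥0∞}
    (h : GagliardoNirenbergBound F μ q α K) (e : E ≃ₗᵢ[ℝ] E') (he : MeasurePreserving e μ μ') :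
    GagliardoNirenbergBound F μ' q α K := by
  intro u hu h2u
  have hemb : MeasurableEmbedding e := e.toHomeomorph.measurableEmbedding
  have hfderiv (x : E) : ‖fderiv ℝ (u ∘ e) x‖ₑ = ‖fderiv ℝ u (e x)‖ₑ := by
    rw [show u ∘ e = u ∘ e.toContinuousLinearEquiv from rfl,
      ContinuousLinearEquiv.comp_right_fderiv, ← ofReal_norm, ← ofReal_norm]
    exact congrArg _ ((fderiv ℝ u (e x)).opNorm_comp_linearIsometryEquiv e)
  calc ∫⁻ y, ‖u y‖ₑ ^ q ∂μ' = ∫⁻ x, ‖(u ∘ e) x‖ₑ ^ q ∂μ := (he.lintegral_comp_emb hemb _).symm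
    _ ≤ K * (∫⁻ x, ‖fderiv ℝ (u ∘ e) x‖ₑ ^ (2 : ℝ) ∂μ) ^ (α / 2) *
          (∫⁻ x, ‖(u ∘ e) x‖ₑ ^ (2 : ℝ) ∂μ) ^ ((q - α) / 2) :=
        h _ (hu.comp e.contDiff) (h2u.comp_homeomorph e.toHomeomorph)
    _ = _ := by
        simp only [hfderiv, Function.comp_apply]
        rw [he.lintegral_comp_emb hemb (fun y => ‖fderiv ℝ u y‖ₑ ^ (2 : ℝ)),
          he.lintegral_comp_emb hemb (fun y => ‖u y‖ₑ ^ (2 : ℝ))]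

theorem GagliardoNirenbergBound.exists_le_mul_add [OpensMeasurableSpace E]
    [IsFiniteMeasureOnCompacts μ] {q α : ℝ} {K : ℝ≥0∞} (h : GagliardoNirenbergBound F μ q α K)
    (hK : K ≠ ∞) (hα₀ : 0 < α) (hα₂ : α < 2) (hαq : α ≤ q) {ε : ℝ} (hε : 0 < ε) :
    ∃ C > (0 : ℝ), ∀ u : E → F, ContDiff ℝ 1 u → HasCompactSupport u →
      (eLpNorm u (ENNReal.ofReal q) μ).toReal ^ q ≤
        ε * (eLpNorm (fun x => ‖fderiv ℝ u x‖) 2 μ).toReal ^ (2 : ℝ) +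
          C * (eLpNorm u 2 μ).toReal ^ ((q - α) * (2 / (2 - α))) := by
  obtain ⟨C, hC, young⟩ := Real.exists_mul_rpow_mul_rpow_le_mul_sq_add (β := q - α) hα₀ hα₂
    ENNReal.toReal_nonneg (K := K.toReal) hε
  refine ⟨C, hC, fun u hu h2u => ?_⟩
  set a := eLpNorm (fderiv ℝ u) 2 μ
  set b := eLpNorm u 2 μ
  have ha : a ≠ ∞ := ((hu.continuous_fderiv one_ne_zero).memLp_of_hasCompactSupport
    (h2u.fderiv (𝕜 := ℝ))).eLpNorm_ne_top
  have hb : b ≠ ∞ := (hu.continuous.memLp_of_hasCompactSupport h2u).eLpNorm_ne_top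
  have hGN : eLpNorm u (ENNReal.ofReal q) μ ^ q ≤ K * a ^ α * b ^ (q - α) := by
    have := h u hu h2u
    rwa [lintegral_enorm_rpow_eq_eLpNorm_rpow (by linarith),
      lintegral_enorm_rpow_eq_eLpNorm_rpow zero_lt_two,
      lintegral_enorm_rpow_eq_eLpNorm_rpow zero_lt_two, ENNReal.ofReal_ofNat, ← ENNReal.rpow_mul,
      ← ENNReal.rpow_mul, mul_div_cancel₀ _ two_ne_zero, mul_div_cancel₀ _ two_ne_zero] at this
  rw [eLpNorm_norm]
  calc (eLpNorm u (ENNReal.ofReal q) μ).toReal ^ q = (eLpNorm u (ENNReal.ofReal q) μ ^ q).toReal :=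
        ENNReal.toReal_rpow _ _
    _ ≤ (K * a ^ α * b ^ (q - α)).toReal := by
        refine ENNReal.toReal_mono ?_ hGN
        have := ENNReal.rpow_ne_top_of_nonneg hα₀.le ha
        have := ENNReal.rpow_ne_top_of_nonneg (sub_nonneg.2 hαq) hb
        finiteness
    _ = K.toReal * a.toReal ^ α * b.toReal ^ (q - α) := by
        simp only [ENNReal.toReal_mul, ← ENNReal.toReal_rpow]
    _ ≤ _ := young _ _ ENNReal.toReal_nonneg ENNReal.toReal_nonneg

end NormedSpace

section InnerProductSpace

variable {E F : Type*} [NormedAddCommGroup E] [NormedSpace ℝ E] [MeasurableSpace E]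
  [NormedAddCommGroup F] [InnerProductSpace ℝ F]

theorem lintegral_enorm_fderiv_norm_rpow_two_le [OpensMeasurableSpace E] {u : E → F}
    (hu : ContDiff ℝ 1 u) (μ : Measure E) :
    ∫⁻ x, ‖fderiv ℝ (fun y => ‖u y‖ ^ (2 : ℝ)) x‖ₑ ∂μ ≤
      2 * (∫⁻ x, ‖u x‖ₑ ^ (2 : ℝ) ∂μ) ^ (1 / 2 : ℝ) *
        (∫⁻ x, ‖fderiv ℝ u x‖ₑ ^ (2 : ℝ) ∂μ) ^ (1 / 2 : ℝ) := by
  calc ∫⁻ x, ‖fderiv ℝ (fun y => ‖u y‖ ^ (2 : ℝ)) x‖ₑ ∂μ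
      ≤ ∫⁻ x, 2 * (‖u x‖ₑ * ‖fderiv ℝ u x‖ₑ) ∂μ := lintegral_mono fun x => by
        simpa [mul_assoc, show (2 : ℝ) - 1 = 1 by norm_num] using
          enorm_fderiv_norm_rpow_le (hu.differentiable one_ne_zero) (x := x) (p := 2) one_lt_two
    _ = 2 * ∫⁻ x, ‖u x‖ₑ * ‖fderiv ℝ u x‖ₑ ∂μ := lintegral_const_mul' _ _ ENNReal.ofNat_ne_top
    _ ≤ _ := by
        rw [mul_assoc]
        gcongr
        simpa using ENNReal.lintegral_mul_le_Lp_mul_Lq μ Real.HolderConjugate.two_two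
          hu.continuous.enorm.aemeasurable (hu.continuous_fderiv one_ne_zero).enorm.aemeasurable

theorem HasCompactSupport.enorm_rpow_two_le {g : ℝ → F} (hg : ContDiff ℝ 1 g)
    (h2g : HasCompactSupport g) (t : ℝ) :
    ‖g t‖ₑ ^ (2 : ℝ) ≤
      2 * (∫⁻ s, ‖g s‖ₑ ^ (2 : ℝ)) ^ (1 / 2 : ℝ) *
        (∫⁻ s, ‖fderiv ℝ g s‖ₑ ^ (2 : ℝ)) ^ (1 / 2 : ℝ) := by
  set v := fun s => ‖g s‖ ^ (2 : ℝ)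
  have hv : ContDiff ℝ 1 v := hg.norm_rpow one_lt_two
  have h2v : HasCompactSupport v := h2g.norm.rpow_const two_ne_zero
  calc ‖g t‖ₑ ^ (2 : ℝ) = ‖v t‖ₑ := by
        rw [Real.enorm_rpow_of_nonneg (norm_nonneg _) zero_le_two, enorm_norm]
    _ ≤ ∫⁻ s in Set.Iic t, ‖deriv v s‖ₑ := h2v.enorm_le_lintegral_Ici_deriv hv t
    _ ≤ ∫⁻ s, ‖fderiv ℝ v s‖ₑ := by
        simp_rw [← ofReal_norm, norm_deriv_eq_norm_fderiv]
        exact setLIntegral_le_lintegral _ _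
    _ ≤ _ := lintegral_enorm_fderiv_norm_rpow_two_le hg volume

theorem gagliardoNirenbergBound_real {σ : ℝ} (hσ : 0 ≤ σ) :
    GagliardoNirenbergBound F (volume : Measure ℝ) (2 + 2 * σ) σ (2 ^ σ) := by
  intro g hg h2g
  set J := ∫⁻ s, ‖g s‖ₑ ^ (2 : ℝ)
  set G := ∫⁻ s, ‖fderiv ℝ g s‖ₑ ^ (2 : ℝ)
  calc ∫⁻ t, ‖g t‖ₑ ^ (2 + 2 * σ) = ∫⁻ t, (‖g t‖ₑ ^ (2 : ℝ)) ^ σ * ‖g t‖ₑ ^ (2 : ℝ) := by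
        refine lintegral_congr fun t => ?_
        rw [← ENNReal.rpow_mul, ← ENNReal.rpow_add_of_nonneg _ _ (by positivity) zero_le_two]
        ring_nf
    _ ≤ ∫⁻ t, (2 * J ^ (1 / 2 : ℝ) * G ^ (1 / 2 : ℝ)) ^ σ * ‖g t‖ₑ ^ (2 : ℝ) :=
        lintegral_mono fun t => by gcongr; exact h2g.enorm_rpow_two_le hg t
    _ = (2 * J ^ (1 / 2 : ℝ) * G ^ (1 / 2 : ℝ)) ^ σ * J :=
        lintegral_const_mul _ (hg.continuous.enorm.measurable.pow_const _)
    _ = 2 ^ σ * G ^ (σ / 2) * J ^ ((2 + 2 * σ - σ) / 2) := by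
        rw [ENNReal.mul_rpow_of_nonneg _ _ hσ, ENNReal.mul_rpow_of_nonneg _ _ hσ,
          ← ENNReal.rpow_mul, ← ENNReal.rpow_mul, show (2 + 2 * σ - σ) / 2 = 1 / 2 * σ + 1 by ring,
          ENNReal.rpow_add_of_nonneg _ _ (by positivity) zero_le_one, ENNReal.rpow_one,
          show 1 / 2 * σ = σ / 2 by ring]
        ring

section HaarMeasure

variable [FiniteDimensional ℝ E] [BorelSpace E] (μ : Measure E) [μ.IsAddHaarMeasure]

theorem lintegral_enorm_rpow_four_le_of_finrank_eq_two (hE : finrank ℝ E = 2) {u : E → F}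
    (hu : ContDiff ℝ 1 u) (h2u : HasCompactSupport u) :
    ∫⁻ x, ‖u x‖ₑ ^ (4 : ℝ) ∂μ ≤
      4 * lintegralPowLePowLIntegralFDerivConst μ 2 * (∫⁻ x, ‖u x‖ₑ ^ (2 : ℝ) ∂μ) *
        ∫⁻ x, ‖fderiv ℝ u x‖ₑ ^ (2 : ℝ) ∂μ := by
  have hp : Real.HolderConjugate (finrank ℝ E) 2 := by
    rw [hE]; exact_mod_cast Real.HolderConjugate.two_two
  calc ∫⁻ x, ‖u x‖ₑ ^ (4 : ℝ) ∂μ = ∫⁻ x, ‖‖u x‖ ^ (2 : ℝ)‖ₑ ^ (2 : ℝ) ∂μ := by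
        refine lintegral_congr fun x => ?_
        rw [Real.enorm_rpow_of_nonneg (norm_nonneg _) zero_le_two, enorm_norm, ← ENNReal.rpow_mul]
        norm_num
    _ ≤ lintegralPowLePowLIntegralFDerivConst μ 2 *
          (∫⁻ x, ‖fderiv ℝ (fun y => ‖u y‖ ^ (2 : ℝ)) x‖ₑ ∂μ) ^ (2 : ℝ) :=
        lintegral_pow_le_pow_lintegral_fderiv μ (hu.norm_rpow one_lt_two)
          (h2u.norm.rpow_const two_ne_zero) hp
    _ ≤ lintegralPowLePowLIntegralFDerivConst μ 2 *
          (2 * (∫⁻ x, ‖u x‖ₑ ^ (2 : ℝ) ∂μ) ^ (1 / 2 : ℝ) *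
            (∫⁻ x, ‖fderiv ℝ u x‖ₑ ^ (2 : ℝ) ∂μ) ^ (1 / 2 : ℝ)) ^ (2 : ℝ) := by
        gcongr
        exact lintegral_enorm_fderiv_norm_rpow_two_le hu μ
    _ = _ := by
        rw [ENNReal.mul_rpow_of_nonneg _ _ zero_le_two, ENNReal.mul_rpow_of_nonneg _ _ zero_le_two,
          ← ENNReal.rpow_mul, ← ENNReal.rpow_mul]
        norm_num
        ring

theorem exists_gagliardoNirenbergBound_of_finrank_eq_two (hE : finrank ℝ E = 2) {σ : ℝ}
    (hσ₀ : 0 ≤ σ) (hσ₁ : σ ≤ 1) :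
    ∃ K ≠ ∞, GagliardoNirenbergBound F μ (2 + 2 * σ) (2 * σ) K := by
  refine ⟨(4 * lintegralPowLePowLIntegralFDerivConst μ 2) ^ σ,
    ENNReal.rpow_ne_top_of_nonneg hσ₀ (by finiteness), fun u hu h2u => ?_⟩
  set J := ∫⁻ x, ‖u x‖ₑ ^ (2 : ℝ) ∂μ
  set G := ∫⁻ x, ‖fderiv ℝ u x‖ₑ ^ (2 : ℝ) ∂μ
  calc ∫⁻ x, ‖u x‖ₑ ^ (2 + 2 * σ) ∂μ
      = ∫⁻ x, ‖u x‖ₑ ^ ((1 - σ) * 2 + (1 - (1 - σ)) * 4) ∂μ := by ring_nf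
    _ ≤ J ^ (1 - σ) * (∫⁻ x, ‖u x‖ₑ ^ (4 : ℝ) ∂μ) ^ (1 - (1 - σ)) :=
        ENNReal.lintegral_rpow_interpolate_le hu.continuous.enorm.aemeasurable zero_le_two
          zero_le_four (by linarith) (by linarith)
    _ ≤ J ^ (1 - σ) * (4 * lintegralPowLePowLIntegralFDerivConst μ 2 * J * G) ^ σ := by
        rw [sub_sub_cancel]
        gcongr
        exact lintegral_enorm_rpow_four_le_of_finrank_eq_two μ hE hu h2u
    _ = (4 * lintegralPowLePowLIntegralFDerivConst μ 2) ^ σ * G ^ (2 * σ / 2) *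
          J ^ ((2 + 2 * σ - 2 * σ) / 2) := by
        rw [ENNReal.mul_rpow_of_nonneg _ _ hσ₀, ENNReal.mul_rpow_of_nonneg _ _ hσ₀,
          show (2 + 2 * σ - 2 * σ) / 2 = (1 - σ) + σ by ring, show 2 * σ / 2 = σ by ring,
          ENNReal.rpow_add_of_nonneg _ _ (by linarith) hσ₀]
        ring

theorem lintegral_enorm_rpow_sobolevExponent_le {n : ℕ} (hE : finrank ℝ E = n) (hn : 3 ≤ n)
    {u : E → F} (hu : ContDiff ℝ 1 u) (h2u : HasCompactSupport u) :
    ∫⁻ x, ‖u x‖ₑ ^ (2 * n / (n - 2 : ℝ)) ∂μ ≤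
      (eLpNormLESNormFDerivOfEqInnerConst μ 2 : ℝ≥0∞) ^ (2 * n / (n - 2 : ℝ)) *
        (∫⁻ x, ‖fderiv ℝ u x‖ₑ ^ (2 : ℝ) ∂μ) ^ (n / (n - 2 : ℝ)) := by
  have hn' : (3 : ℝ) ≤ n := by exact_mod_cast hn
  set s : ℝ := 2 * n / (n - 2)
  have hs : 0 < s := div_pos (by linarith) (by linarith)
  have sobolev := eLpNorm_le_eLpNorm_fderiv_of_eq_inner μ hu h2u (p := 2) (p' := s.toNNReal)
    one_le_two (by omega) (by
      rw [Real.coe_toNNReal _ hs.le, hE]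
      simp only [s, inv_div]
      push_cast
      field_simp)
  rw [← ENNReal.ofReal, ← ENNReal.rpow_le_rpow_iff hs] at sobolev
  rw [lintegral_enorm_rpow_eq_eLpNorm_rpow hs, lintegral_enorm_rpow_eq_eLpNorm_rpow zero_lt_two]
  calc eLpNorm u (ENNReal.ofReal s) μ ^ s
      ≤ (eLpNormLESNormFDerivOfEqInnerConst μ 2 * eLpNorm (fderiv ℝ u) 2 μ) ^ s := sobolev
    _ = _ := by
        rw [ENNReal.mul_rpow_of_nonneg _ _ hs.le, ← ENNReal.rpow_mul, ENNReal.ofReal_ofNat]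
        congr 2
        simp only [s]
        field_simp

theorem exists_gagliardoNirenbergBound_of_three_le_finrank {n : ℕ} (hE : finrank ℝ E = n)
    (hn : 3 ≤ n) {σ : ℝ} (hσ₀ : 0 ≤ σ) (hσ : σ * (n - 2) ≤ 2) :
    ∃ K ≠ ∞, GagliardoNirenbergBound F μ (2 + 2 * σ) (σ * n) K := by
  have hn' : (3 : ℝ) ≤ n := by exact_mod_cast hn
  set S : ℝ≥0∞ := (eLpNormLESNormFDerivOfEqInnerConst μ 2 : ℝ≥0∞)
  refine ⟨S ^ (σ * n), ENNReal.rpow_ne_top_of_nonneg (by positivity) ENNReal.coe_ne_top,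
    fun u hu h2u => ?_⟩
  set J := ∫⁻ x, ‖u x‖ₑ ^ (2 : ℝ) ∂μ
  set G := ∫⁻ x, ‖fderiv ℝ u x‖ₑ ^ (2 : ℝ) ∂μ
  set s : ℝ := 2 * n / (n - 2)
  set θ := (2 + 2 * σ - σ * n) / 2
  have hn2 : (n - 2 : ℝ) ≠ 0 := by linarith
  have h1θ : 1 - θ = σ * (n - 2) / 2 := by simp only [θ]; ring
  have hθ₀ : 0 ≤ θ := by linarith
  have hθ₁ : 0 ≤ 1 - θ := by rw [h1θ]; exact div_nonneg (mul_nonneg hσ₀ (by linarith)) zero_le_two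
  have hexp : 2 + 2 * σ = θ * 2 + (1 - θ) * s := by
    rw [h1θ]
    simp only [θ, s]
    field_simp
    ring
  calc ∫⁻ x, ‖u x‖ₑ ^ (2 + 2 * σ) ∂μ = ∫⁻ x, ‖u x‖ₑ ^ (θ * 2 + (1 - θ) * s) ∂μ := by rw [hexp]
    _ ≤ J ^ θ * (∫⁻ x, ‖u x‖ₑ ^ s ∂μ) ^ (1 - θ) :=
        ENNReal.lintegral_rpow_interpolate_le hu.continuous.enorm.aemeasurable zero_le_two
          (div_pos (by linarith) (by linarith)).le hθ₀ (by linarith)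
    _ ≤ J ^ θ * (S ^ s * G ^ (n / (n - 2 : ℝ))) ^ (1 - θ) := by
        gcongr
        exact lintegral_enorm_rpow_sobolevExponent_le μ hE hn hu h2u
    _ = S ^ (σ * n) * G ^ (σ * n / 2) * J ^ θ := by
        rw [ENNReal.mul_rpow_of_nonneg _ _ hθ₁, ← ENNReal.rpow_mul, ← ENNReal.rpow_mul,
          show s * (1 - θ) = σ * n by rw [h1θ]; simp only [s]; field_simp,
          show n / (n - 2 : ℝ) * (1 - θ) = σ * n / 2 by rw [h1θ]; field_simp]
        ring

end HaarMeasure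

theorem exists_gagliardoNirenbergBound_euclideanSpace {d : ℕ} (hd : 1 ≤ d) {σ : ℝ} (hσ : 0 ≤ σ)
    (hσd : σ * d ≤ 2) :
    ∃ K ≠ ∞, GagliardoNirenbergBound F (volume : Measure (EuclideanSpace ℝ (Fin d)))
      (2 + 2 * σ) (σ * d) K := by
  obtain rfl | rfl | hd₃ : d = 1 ∨ d = 2 ∨ 3 ≤ d := by omega
  · refine ⟨2 ^ σ, ENNReal.rpow_ne_top_of_nonneg hσ ENNReal.ofNat_ne_top, ?_⟩
    simpa using (gagliardoNirenbergBound_real hσ).map_linearIsometryEquiv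
      (OrthonormalBasis.singleton (Fin 1) ℝ).repr (LinearIsometryEquiv.measurePreserving _)
  · simpa [mul_comm] using exists_gagliardoNirenbergBound_of_finrank_eq_two (F := F) volume
      (by simp) hσ (by push_cast at hσd; linarith)
  · exact exists_gagliardoNirenbergBound_of_three_le_finrank volume finrank_euclideanSpace_fin hd₃
      hσ (by nlinarith)

end InnerProductSpace

/-- Young-type consequence of Gagliardo–Nirenberg: for σd < 2 and every ε > 0 there is C_ε with
`‖u‖_{L^{2+2σ}}^{2+2σ} ≤ ε ‖∇u‖_{L²}² + C_ε ‖u‖_{L²}^{2+4σ/(2−σd)}`. -/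
theorem stmt3 (d : ℕ) (hd : 1 ≤ d) (σ : ℝ) (hσ : 0 < σ) (hσd : σ * d < 2) :
    ∀ ε > (0 : ℝ), ∃ C > (0 : ℝ), ∀ u : EuclideanSpace ℝ (Fin d) → ℂ,
      ContDiff ℝ 1 u → HasCompactSupport u →
      (eLpNorm u (ENNReal.ofReal (2 + 2 * σ)) volume).toReal ^ (2 + 2 * σ) ≤
        ε * (eLpNorm (fun x => ‖fderiv ℝ u x‖) 2 volume).toReal ^ (2 : ℝ) +
          C * (eLpNorm u 2 volume).toReal ^ (2 + 4 * σ / (2 - σ * d)) := by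
  intro ε hε
  obtain ⟨K, hK, hGN⟩ := exists_gagliardoNirenbergBound_euclideanSpace (F := ℂ) hd hσ.le hσd.le
  obtain ⟨C, hC, hbound⟩ := hGN.exists_le_mul_add hK (by positivity) hσd (by nlinarith) hε
  refine ⟨C, hC, fun u hu h2u => (hbound u hu h2u).trans_eq ?_⟩
  have : (2 : ℝ) - σ * d ≠ 0 := by linarith
  congr 3
  field_simp
  ring
end

section
/- Let d ≥ 1 be an integer and σ > 0 a real number with σ d < 2. Then there exists a constant G > 0 such that for every continuously differentiable function u : ℝ^d → ℂ with compact support, (1/(2(1+σ))) ‖u‖_{L^{2+2σ}}^{2+2σ} ≤ (1/4) ‖∇u‖_{L²}² + G ‖u‖_{L²}^{2 + 4σ/(2 − σd)}; consequently, for every such u, (1/2) ‖∇u‖_{L²}² − (1/(2(1+σ))) ‖u‖_{L^{2+2σ}}^{2+2σ} + G ‖u‖_{L²}^{2 + 4σ/(2 − σd)} ≥ (1/4) ‖∇u‖_{L²}². -/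
/-!
Gagliardo–Nirenberg, `‖u‖_{2+2σ}^{2+2σ} ≤ C ‖∇u‖₂^{σd} ‖u‖₂^{2+2σ-σd}`, combined with Young's
inequality for the exponents `2/(σd)` and `2/(2-σd)` absorbs a quarter of `‖∇u‖₂²` and leaves
`G ‖u‖₂^{2+4σ/(2-σd)}`. Gagliardo–Nirenberg itself is Hölder interpolation between `L²` and an
endpoint estimate: for `d ≥ 3` the Sobolev embedding `Ḣ¹ ⊆ L^{2d/(d-2)}`; for `d = 2` the
`W^{1,1}` Sobolev inequality applied to `|u|²`, giving `‖u‖₄⁴ ≲ ‖u‖₂² ‖∇u‖₂²`; for `d = 1` no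
interpolation is needed, since `|u|² ≤ ∫ |(|u|²)'| ≤ 2 ‖u‖₂ ‖u'‖₂` pointwise.
-/

open MeasureTheory
open scoped ENNReal NNReal

theorem Real.exists_mul_rpow_mul_rpow_le_mul_add_mul {w c ε : ℝ} (hw₀ : 0 < w) (hw₁ : w < 1)
    (hc : 0 < c) (hε : 0 < ε) :
    ∃ K > (0 : ℝ), ∀ t s : ℝ, 0 ≤ t → 0 ≤ s → c * (t ^ w * s ^ (1 - w)) ≤ ε * t + K * s := by
  have hw' : 0 < 1 - w := by linarith
  set k := (c * (w / ε) ^ w) ^ (1 / (1 - w))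
  refine ⟨(1 - w) * k, by positivity, fun t s ht hs ↦ ?_⟩
  have hk : k ^ (1 - w) = c * (w / ε) ^ w := by
    rw [← Real.rpow_mul (by positivity), one_div_mul_cancel hw'.ne', Real.rpow_one]
  calc c * (t ^ w * s ^ (1 - w)) = (ε / w * t) ^ w * (k * s) ^ (1 - w) := by
        rw [Real.mul_rpow (by positivity) ht, Real.mul_rpow (by positivity) hs, hk,
          Real.div_rpow hε.le hw₀.le, Real.div_rpow hw₀.le hε.le]
        field_simp
    _ ≤ w * (ε / w * t) + (1 - w) * (k * s) :=
        Real.geom_mean_le_arith_mean2_weighted hw₀.le hw'.le (by positivity) (by positivity)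
          (by ring)
    _ = ε * t + (1 - w) * k * s := by field_simp

theorem lintegral_rpow_add_le_Lp_mul_Lr {α : Type*} [MeasurableSpace α] (μ : Measure α)
    {f : α → ℝ≥0∞} (hf : AEMeasurable f μ) {p r a b : ℝ} (ha : 0 < a) (hb : 0 < b)
    (hap : a < p) (hab : a / p + b / r = 1) :
    ∫⁻ x, f x ^ (a + b) ∂μ ≤ (∫⁻ x, f x ^ p ∂μ) ^ (a / p) * (∫⁻ x, f x ^ r ∂μ) ^ (b / r) := by
  have hpq : (p / a).HolderConjugate (r / b) := by
    rw [Real.holderConjugate_iff, inv_div, inv_div]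
    exact ⟨by rwa [lt_div_iff₀ ha, one_mul], hab⟩
  calc ∫⁻ x, f x ^ (a + b) ∂μ = ∫⁻ x, ((fun x ↦ f x ^ a) * fun x ↦ f x ^ b) x ∂μ :=
        lintegral_congr fun x ↦ ENNReal.rpow_add_of_nonneg _ _ ha.le hb.le
    _ ≤ (∫⁻ x, (f x ^ a) ^ (p / a) ∂μ) ^ (1 / (p / a)) *
          (∫⁻ x, (f x ^ b) ^ (r / b) ∂μ) ^ (1 / (r / b)) :=
        ENNReal.lintegral_mul_le_Lp_mul_Lq μ hpq (hf.pow_const a) (hf.pow_const b)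
    _ = (∫⁻ x, f x ^ p ∂μ) ^ (a / p) * (∫⁻ x, f x ^ r ∂μ) ^ (b / r) := by
        simp_rw [← ENNReal.rpow_mul, mul_div_cancel₀ _ ha.ne', mul_div_cancel₀ _ hb.ne', one_div,
          inv_div]

theorem lintegral_enorm_rpow_two_eq {α F : Type*} [MeasurableSpace α] [NormedAddCommGroup F]
    {μ : Measure α} (u : α → F) : ∫⁻ x, ‖u x‖ₑ ^ (2 : ℝ) ∂μ = eLpNorm u 2 μ ^ (2 : ℝ) := by
  simpa using (eLpNorm_nnreal_pow_eq_lintegral (f := u) (μ := μ) (p := 2) two_ne_zero).symm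

theorem HasCompactSupport.enorm_le_eLpNorm_one_fderiv {F : Type*} [NormedAddCommGroup F]
    [NormedSpace ℝ F] {f : ℝ → F} (hf : ContDiff ℝ 1 f) (h2f : HasCompactSupport f) (x : ℝ) :
    ‖f x‖ₑ ≤ eLpNorm (fderiv ℝ f) 1 volume :=
  calc ‖f x‖ₑ ≤ ∫⁻ y in Set.Iic x, ‖deriv f y‖ₑ := h2f.enorm_le_lintegral_Ici_deriv hf x
    _ ≤ ∫⁻ y, ‖deriv f y‖ₑ := setLIntegral_le_lintegral _ _
    _ = eLpNorm (fderiv ℝ f) 1 volume := by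
        rw [eLpNorm_one_eq_lintegral_enorm]
        simp_rw [← ofReal_norm, norm_deriv_eq_norm_fderiv]

section GagliardoNirenberg

variable {E F : Type*} [NormedAddCommGroup E] [NormedSpace ℝ E] [MeasurableSpace E]
  [NormedAddCommGroup F] [NormedSpace ℝ F] {μ : Measure E}

variable (F) in
def HasGagliardoNirenbergBound (μ : Measure E) (q θ : ℝ) : Prop :=
  ∃ C : ℝ≥0, ∀ u : E → F, ContDiff ℝ 1 u → HasCompactSupport u →
    ∫⁻ x, ‖u x‖ₑ ^ q ∂μ ≤ C * eLpNorm (fderiv ℝ u) 2 μ ^ θ * eLpNorm u 2 μ ^ (q - θ)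

theorem HasGagliardoNirenbergBound.of_linearIsometryEquiv [BorelSpace E] {E' : Type*}
    [NormedAddCommGroup E'] [NormedSpace ℝ E'] [MeasurableSpace E'] [BorelSpace E']
    {μ' : Measure E'} {q θ : ℝ} (e : E ≃ₗᵢ[ℝ] E') (he : MeasurePreserving e μ μ')
    (h : HasGagliardoNirenbergBound F μ q θ) : HasGagliardoNirenbergBound F μ' q θ := by
  obtain ⟨C, hC⟩ := h
  refine ⟨C, fun u hu h2u ↦ ?_⟩
  have hemb : MeasurableEmbedding e := e.toHomeomorph.measurableEmbedding
  have hfderiv : ∀ x, ‖fderiv ℝ (u ∘ e) x‖ = ‖fderiv ℝ u (e x)‖ := fun x ↦ by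
    rw [← e.coe_toContinuousLinearEquiv, e.toContinuousLinearEquiv.comp_right_fderiv]
    exact (fderiv ℝ u (e x)).opNorm_comp_linearIsometryEquiv e
  have hu' := hC (u ∘ e) (hu.comp e.contDiff) (h2u.comp_homeomorph e.toHomeomorph)
  rw [eLpNorm_congr_norm_ae (.of_forall hfderiv)] at hu'
  rw [← he.map_eq, hemb.lintegral_map, hemb.eLpNorm_map_measure, hemb.eLpNorm_map_measure]
  exact hu'

theorem HasGagliardoNirenbergBound.interpolate [BorelSpace E] {q r θ : ℝ}
    (h : HasGagliardoNirenbergBound F μ r θ) (hθr : θ ≤ r) (hq : 2 < q) (hqr : q < r) :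
    HasGagliardoNirenbergBound F μ q (θ * (q - 2) / (r - 2)) := by
  obtain ⟨C, hC⟩ := h
  have hr : 0 < r - 2 := by linarith
  have hr0 : 0 < r := by linarith
  set b := r * (q - 2) / (r - 2) with hb_def
  set a := q - b with ha_def
  have hb : 0 < b := div_pos (mul_pos hr0 (by linarith)) hr
  have ha : a = 2 * (r - q) / (r - 2) := by rw [ha_def, hb_def]; field_simp; ring
  have ha0 : 0 < a := by rw [ha]; apply div_pos <;> linarith
  have ha2 : a < 2 := by rw [ha, div_lt_iff₀ hr]; linarith
  have hab : a / 2 + b / r = 1 := by rw [ha, hb_def]; field_simp; ring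
  have hbr : 0 ≤ b / r := (div_pos hb hr0).le
  refine ⟨C ^ (b / r), fun u hu h2u ↦ ?_⟩
  set X := eLpNorm (fderiv ℝ u) 2 μ
  set Y := eLpNorm u 2 μ
  calc ∫⁻ x, ‖u x‖ₑ ^ q ∂μ = ∫⁻ x, ‖u x‖ₑ ^ (a + b) ∂μ := by rw [ha_def, sub_add_cancel]
    _ ≤ (∫⁻ x, ‖u x‖ₑ ^ (2 : ℝ) ∂μ) ^ (a / 2) * (∫⁻ x, ‖u x‖ₑ ^ r ∂μ) ^ (b / r) :=
        lintegral_rpow_add_le_Lp_mul_Lr μ hu.continuous.enorm.aemeasurable ha0 hb ha2 hab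
    _ ≤ (Y ^ (2 : ℝ)) ^ (a / 2) * (C * X ^ θ * Y ^ (r - θ)) ^ (b / r) := by
        rw [lintegral_enorm_rpow_two_eq]
        gcongr
        exact hC u hu h2u
    _ = ((C ^ (b / r) : ℝ≥0) : ℝ≥0∞) * X ^ (θ * (q - 2) / (r - 2)) *
          Y ^ (q - θ * (q - 2) / (r - 2)) := by
        have hθ' : θ * (q - 2) / (r - 2) = θ * (b / r) := by rw [hb_def]; field_simp
        have hY : q - θ * (b / r) = 2 * (a / 2) + (r - θ) * (b / r) := by
          rw [ha_def]; field_simp; ring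
        rw [ENNReal.coe_rpow_of_nonneg _ hbr, ENNReal.mul_rpow_of_nonneg _ _ hbr,
          ENNReal.mul_rpow_of_nonneg _ _ hbr, ← ENNReal.rpow_mul, ← ENNReal.rpow_mul,
          ← ENNReal.rpow_mul, hθ', hY,
          ENNReal.rpow_add_of_nonneg _ _ (by positivity) (mul_nonneg (by linarith) hbr)]
        ring

theorem HasGagliardoNirenbergBound.exists_toReal_le [FiniteDimensional ℝ E] [BorelSpace E]
    [IsFiniteMeasureOnCompacts μ] {q θ : ℝ} (h : HasGagliardoNirenbergBound F μ q θ)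
    (hq : 0 < q) (hθ : 0 ≤ θ) (hθq : θ ≤ q) :
    ∃ C > (0 : ℝ), ∀ u : E → F, ContDiff ℝ 1 u → HasCompactSupport u →
      (eLpNorm u (ENNReal.ofReal q) μ).toReal ^ q ≤
        C * (eLpNorm (fderiv ℝ u) 2 μ).toReal ^ θ * (eLpNorm u 2 μ).toReal ^ (q - θ) := by
  obtain ⟨C, hC⟩ := h
  refine ⟨C + 1, by positivity, fun u hu h2u ↦ ?_⟩
  have hX := ((hu.continuous_fderiv one_ne_zero).memLp_of_hasCompactSupport (μ := μ) (p := 2)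
    (h2u.fderiv ℝ)).eLpNorm_ne_top
  have hY := (hu.continuous.memLp_of_hasCompactSupport (μ := μ) (p := 2) h2u).eLpNorm_ne_top
  have hL : eLpNorm u (ENNReal.ofReal q) μ ^ q = ∫⁻ x, ‖u x‖ₑ ^ q ∂μ := by
    have := eLpNorm_nnreal_pow_eq_lintegral (f := u) (μ := μ) (p := q.toNNReal) (by simpa using hq)
    rwa [Real.coe_toNNReal _ hq.le] at this
  calc (eLpNorm u (ENNReal.ofReal q) μ).toReal ^ q
      = (∫⁻ x, ‖u x‖ₑ ^ q ∂μ).toReal := by rw [← hL, ENNReal.toReal_rpow]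
    _ ≤ (C * eLpNorm (fderiv ℝ u) 2 μ ^ θ * eLpNorm u 2 μ ^ (q - θ)).toReal :=
        ENNReal.toReal_mono (by finiteness) (hC u hu h2u)
    _ ≤ (C + 1) * (eLpNorm (fderiv ℝ u) 2 μ).toReal ^ θ * (eLpNorm u 2 μ).toReal ^ (q - θ) := by
        simp only [ENNReal.toReal_mul, ENNReal.toReal_rpow, ENNReal.coe_toReal]
        gcongr
        linarith

end GagliardoNirenberg

section HilbertCodomain

variable {E F : Type*} [NormedAddCommGroup E] [NormedSpace ℝ E] [FiniteDimensional ℝ E]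
  [MeasurableSpace E] [BorelSpace E] [NormedAddCommGroup F] [InnerProductSpace ℝ F]

theorem eLpNorm_one_fderiv_norm_sq_le {μ : Measure E} {u : E → F} (hu : ContDiff ℝ 1 u) :
    eLpNorm (fderiv ℝ fun x ↦ ‖u x‖ ^ (2 : ℝ)) 1 μ ≤
      2 * eLpNorm u 2 μ * eLpNorm (fderiv ℝ u) 2 μ := by
  have hbound : ∀ x, ‖fderiv ℝ (fun x ↦ ‖u x‖ ^ (2 : ℝ)) x‖₊ ≤ 2 * ‖u x‖₊ * ‖fderiv ℝ u x‖₊ := by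
    intro x
    simpa [show (2 : ℝ) - 1 = 1 by norm_num] using
      nnnorm_fderiv_norm_rpow_le (hu.differentiable one_ne_zero) (x := x) (p := 2) one_lt_two
  calc eLpNorm (fderiv ℝ fun x ↦ ‖u x‖ ^ (2 : ℝ)) 1 μ
      ≤ eLpNorm (fun x ↦ ((2 * ‖u x‖₊ * ‖fderiv ℝ u x‖₊ : ℝ≥0) : ℝ)) 1 μ :=
        eLpNorm_mono_nnnorm fun x ↦ by simpa using hbound x
    _ ≤ (2 : ℝ≥0) * eLpNorm u 2 μ * eLpNorm (fderiv ℝ u) 2 μ :=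
        eLpNorm_le_eLpNorm_mul_eLpNorm_of_nnnorm hu.continuous.aestronglyMeasurable
          (hu.continuous_fderiv one_ne_zero).aestronglyMeasurable
          (fun a (L : E →L[ℝ] F) ↦ ((2 * ‖a‖₊ * ‖L‖₊ : ℝ≥0) : ℝ)) 2
          (.of_forall fun x ↦ by simp)
    _ = 2 * eLpNorm u 2 μ * eLpNorm (fderiv ℝ u) 2 μ := by norm_num

theorem hasGagliardoNirenbergBound_real {σ : ℝ} (hσ : 0 ≤ σ) :
    HasGagliardoNirenbergBound F (volume : Measure ℝ) (2 + 2 * σ) σ := by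
  refine ⟨2 ^ σ, fun u hu h2u ↦ ?_⟩
  set M := 2 * eLpNorm u 2 volume * eLpNorm (fderiv ℝ u) 2 volume
  have hsup : ∀ x, ‖u x‖ₑ ^ (2 : ℝ) ≤ M := fun x ↦ by
    have hv := (h2u.norm.rpow_const two_ne_zero).enorm_le_eLpNorm_one_fderiv
      (hu.norm_rpow one_lt_two) x
    rw [Real.enorm_rpow_of_nonneg (norm_nonneg _) zero_le_two, enorm_norm] at hv
    exact hv.trans (eLpNorm_one_fderiv_norm_sq_le hu)
  calc ∫⁻ x, ‖u x‖ₑ ^ (2 + 2 * σ)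
      = ∫⁻ x, (‖u x‖ₑ ^ (2 : ℝ)) ^ σ * ‖u x‖ₑ ^ (2 : ℝ) := lintegral_congr fun x ↦ by
        rw [← ENNReal.rpow_mul, ← ENNReal.rpow_add_of_nonneg _ _ (by positivity) zero_le_two]
        ring_nf
    _ ≤ ∫⁻ x, M ^ σ * ‖u x‖ₑ ^ (2 : ℝ) := by gcongr with x; exact hsup x
    _ = M ^ σ * eLpNorm u 2 volume ^ (2 : ℝ) := by
        rw [lintegral_const_mul _ (hu.continuous.enorm.measurable.pow_const _),
          lintegral_enorm_rpow_two_eq]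
    _ = ((2 ^ σ : ℝ≥0) : ℝ≥0∞) * eLpNorm (fderiv ℝ u) 2 volume ^ σ *
          eLpNorm u 2 volume ^ (2 + 2 * σ - σ) := by
        rw [ENNReal.coe_rpow_of_nonneg _ hσ, show 2 + 2 * σ - σ = σ + 2 by ring,
          ENNReal.rpow_add_of_nonneg _ _ hσ zero_le_two, ENNReal.mul_rpow_of_nonneg _ _ hσ,
          ENNReal.mul_rpow_of_nonneg _ _ hσ]
        simp only [ENNReal.coe_ofNat]
        ring

variable (μ : Measure E) [μ.IsAddHaarMeasure]

theorem hasGagliardoNirenbergBound_four_two (hE : Module.finrank ℝ E = 2) :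
    HasGagliardoNirenbergBound F μ 4 2 := by
  set C₁ := eLpNormLESNormFDerivOneConst μ ((2 : ℝ≥0) : ℝ)
  refine ⟨(2 * C₁) ^ 2, fun u hu h2u ↦ ?_⟩
  have hv : ContDiff ℝ 1 (fun x ↦ ‖u x‖ ^ (2 : ℝ)) := hu.norm_rpow one_lt_two
  have h2v : HasCompactSupport (fun x ↦ ‖u x‖ ^ (2 : ℝ)) := h2u.norm.rpow_const two_ne_zero
  have hconj : NNReal.HolderConjugate (Module.finrank ℝ E) 2 := by
    rw [hE]; exact_mod_cast NNReal.HolderConjugate.two_two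
  calc ∫⁻ x, ‖u x‖ₑ ^ (4 : ℝ) ∂μ = eLpNorm (fun x ↦ ‖u x‖ ^ (2 : ℝ)) 2 μ ^ (2 : ℝ) := by
        rw [← lintegral_enorm_rpow_two_eq]
        refine lintegral_congr fun x ↦ ?_
        rw [Real.enorm_rpow_of_nonneg (norm_nonneg _) zero_le_two, enorm_norm, ← ENNReal.rpow_mul]
        norm_num
    _ ≤ (C₁ * (2 * eLpNorm u 2 μ * eLpNorm (fderiv ℝ u) 2 μ)) ^ (2 : ℝ) := by
        gcongr
        exact (eLpNorm_le_eLpNorm_fderiv_one μ hv h2v hconj).trans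
          (by gcongr; exact eLpNorm_one_fderiv_norm_sq_le hu)
    _ = ((2 * C₁) ^ 2 : ℝ≥0) * eLpNorm (fderiv ℝ u) 2 μ ^ (2 : ℝ) *
          eLpNorm u 2 μ ^ ((4 : ℝ) - 2) := by
        norm_num [ENNReal.mul_rpow_of_nonneg]
        ring

theorem hasGagliardoNirenbergBound_of_two_lt_finrank (hE : 2 < Module.finrank ℝ E) :
    HasGagliardoNirenbergBound F μ (2 * Module.finrank ℝ E / (Module.finrank ℝ E - 2))
      (2 * Module.finrank ℝ E / (Module.finrank ℝ E - 2)) := by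
  set n : ℝ := (Module.finrank ℝ E : ℝ)
  have hn : 2 < n := by simp only [n]; exact_mod_cast hE
  set r := 2 * n / (n - 2)
  have hr : 0 < r := div_pos (by linarith) (by linarith)
  refine ⟨eLpNormLESNormFDerivOfEqInnerConst μ 2 ^ r, fun u hu h2u ↦ ?_⟩
  have hr' : ((r.toNNReal : ℝ))⁻¹ = ((2 : ℝ≥0) : ℝ)⁻¹ - n⁻¹ := by
    rw [Real.coe_toNNReal _ hr.le, NNReal.coe_ofNat]; simp only [r]; field_simp
  calc ∫⁻ x, ‖u x‖ₑ ^ r ∂μ = eLpNorm u r.toNNReal μ ^ r := by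
        have := eLpNorm_nnreal_pow_eq_lintegral (f := u) (μ := μ) (p := r.toNNReal)
          (by simpa using hr)
        rwa [Real.coe_toNNReal _ hr.le, eq_comm] at this
    _ ≤ (eLpNormLESNormFDerivOfEqInnerConst μ 2 * eLpNorm (fderiv ℝ u) 2 μ) ^ r := by
        gcongr
        exact eLpNorm_le_eLpNorm_fderiv_of_eq_inner μ hu h2u one_le_two (by omega) hr'
    _ = ((eLpNormLESNormFDerivOfEqInnerConst μ 2 ^ r : ℝ≥0) : ℝ≥0∞) *
          eLpNorm (fderiv ℝ u) 2 μ ^ r * eLpNorm u 2 μ ^ (r - r) := by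
        rw [sub_self, ENNReal.rpow_zero, mul_one, ENNReal.mul_rpow_of_nonneg _ _ hr.le,
          ENNReal.coe_rpow_of_nonneg _ hr.le]

end HilbertCodomain

theorem hasGagliardoNirenbergBound_euclideanSpace {F : Type*} [NormedAddCommGroup F]
    [InnerProductSpace ℝ F] {d : ℕ} (hd : 1 ≤ d) {σ : ℝ} (hσ : 0 < σ) (hσd : σ * d < 2) :
    HasGagliardoNirenbergBound F (volume : Measure (EuclideanSpace ℝ (Fin d))) (2 + 2 * σ)
      (σ * d) := by
  obtain rfl | rfl | hd3 : d = 1 ∨ d = 2 ∨ 3 ≤ d := by omega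
  · have := (hasGagliardoNirenbergBound_real (F := F) hσ.le).of_linearIsometryEquiv
      (OrthonormalBasis.singleton (Fin 1) ℝ).repr
      (OrthonormalBasis.singleton (Fin 1) ℝ).measurePreserving_repr
    -- the two `volume`s differ in the `Fintype (Fin 1)` instance behind them
    convert this using 1 <;> first | simp | congr!
  · push_cast at hσd
    convert (hasGagliardoNirenbergBound_four_two (F := F)
      (volume : Measure (EuclideanSpace ℝ (Fin 2))) (by simp)).interpolate (q := 2 + 2 * σ)
      (by norm_num) (by linarith) (by linarith) using 1
    push_cast; ring
  · have hd' : (3 : ℝ) ≤ d := by exact_mod_cast hd3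
    have hE : Module.finrank ℝ (EuclideanSpace ℝ (Fin d)) = d := by simp
    have h := (hasGagliardoNirenbergBound_of_two_lt_finrank (F := F)
      (volume : Measure (EuclideanSpace ℝ (Fin d))) (by omega)).interpolate le_rfl
      (q := 2 + 2 * σ) (by linarith) ?_
    · rw [hE] at h
      have hd2 : (d : ℝ) - 2 ≠ 0 := by linarith
      convert h using 1
      field_simp; ring
    · rw [hE, lt_div_iff₀ (by linarith)]; nlinarith

/-- Existence of the Gagliardo–Nirenberg constant G and lower bound for the modified energy. -/
theorem stmt4 (d : ℕ) (hd : 1 ≤ d) (σ : ℝ) (hσ : 0 < σ) (hσd : σ * d < 2) :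
    ∃ G > (0 : ℝ), ∀ u : EuclideanSpace ℝ (Fin d) → ℂ,
      ContDiff ℝ 1 u → HasCompactSupport u →
      (1 / (2 * (1 + σ))) * (eLpNorm u (ENNReal.ofReal (2 + 2 * σ)) volume).toReal ^ (2 + 2 * σ) ≤
          (1 / 4) * (eLpNorm (fun x => ‖fderiv ℝ u x‖) 2 volume).toReal ^ (2 : ℝ) +
            G * (eLpNorm u 2 volume).toReal ^ (2 + 4 * σ / (2 - σ * d)) ∧
      (1 / 2) * (eLpNorm (fun x => ‖fderiv ℝ u x‖) 2 volume).toReal ^ (2 : ℝ) -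
          (1 / (2 * (1 + σ))) * (eLpNorm u (ENNReal.ofReal (2 + 2 * σ)) volume).toReal ^ (2 + 2 * σ) +
          G * (eLpNorm u 2 volume).toReal ^ (2 + 4 * σ / (2 - σ * d)) ≥
        (1 / 4) * (eLpNorm (fun x => ‖fderiv ℝ u x‖) 2 volume).toReal ^ (2 : ℝ) := by
  have hθ : 0 < σ * d := mul_pos hσ (by exact_mod_cast hd)
  obtain ⟨C, hC, hGN⟩ := (hasGagliardoNirenbergBound_euclideanSpace (F := ℂ) hd hσ hσd
    ).exists_toReal_le (by positivity) hθ.le (by linarith)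
  obtain ⟨G, hG, hyoung⟩ := Real.exists_mul_rpow_mul_rpow_le_mul_add_mul (w := σ * d / 2)
    (c := C / (2 * (1 + σ))) (ε := 1 / 4) (by positivity) (by linarith) (by positivity)
    (by norm_num)
  refine ⟨G, hG, fun u hu h2u ↦ ?_⟩
  simp only [eLpNorm_norm]
  set X := (eLpNorm (fderiv ℝ u) 2 volume).toReal
  set Y := (eLpNorm u 2 volume).toReal
  have h2 : 2 - σ * d ≠ 0 := by linarith
  have key : 1 / (2 * (1 + σ)) * (eLpNorm u (ENNReal.ofReal (2 + 2 * σ)) volume).toReal ^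
      (2 + 2 * σ) ≤ 1 / 4 * X ^ (2 : ℝ) + G * Y ^ (2 + 4 * σ / (2 - σ * d)) := calc
    _ ≤ 1 / (2 * (1 + σ)) * (C * X ^ (σ * d) * Y ^ (2 + 2 * σ - σ * d)) := by
        gcongr; exact hGN u hu h2u
    _ = C / (2 * (1 + σ)) * ((X ^ (2 : ℝ)) ^ (σ * d / 2) *
          (Y ^ (2 + 4 * σ / (2 - σ * d))) ^ (1 - σ * d / 2)) := by
        rw [← Real.rpow_mul ENNReal.toReal_nonneg, ← Real.rpow_mul ENNReal.toReal_nonneg,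
          show 2 * (σ * d / 2) = σ * d by ring,
          show (2 + 4 * σ / (2 - σ * d)) * (1 - σ * d / 2) = 2 + 2 * σ - σ * d by field_simp; ring]
        ring
    _ ≤ _ := hyoung _ _ (by positivity) (by positivity)
  exact ⟨key, by linarith⟩
end

section
/- Let σ > 0 and set p = 2/(2σ+1) if 0 < σ < 1/2 and p = 4/3 if σ ≥ 1/2. Then there exists a constant C > 0 such that for every continuously differentiable function u : ℝ² → ℂ with compact support, writing F(u)(x) = |u(x)|^{2σ} u(x), one has ‖F(u)‖_{L^p} + ‖∇(F(u))‖_{L^p} ≤ C ( ‖u‖_{L²} + ‖∇u‖_{L²} )^{2σ+1}. -/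
/-!
Write `c = 2σ`. Pointwise `‖∇F(u)‖ ≤ (c + 1) ‖u‖^c ‖∇u‖`, so by Hölder with `1/p = 1/a + 1/2`
both `‖F(u)‖_p = ‖u‖_{p(c+1)}^{c+1}` and `‖∇F(u)‖_p ≤ (c + 1) ‖u‖_{ac}^c ‖∇u‖_2` are controlled
once `u ↦ ‖u‖_q` is bounded by the `H¹` norm for every `q ≥ 2`; the choice of `p` makes
`p(c + 1) ≥ 2` and `ac ≥ 2`. That embedding `H¹(ℝ²) ⊆ L^q` comes from the two-dimensional
Gagliardo–Nirenberg–Sobolev inequality `‖v‖_2 ≤ S ‖∇v‖_1`: applied to `v = ‖u‖^(c+1)` it gives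
`‖u‖_{2(c+1)}^{c+1} ≤ S (c + 1) ‖u‖_{2c}^c ‖∇u‖_2`, which climbs from `L²` through every `L^{2n}`,
and Hölder interpolation fills in the exponents in between.
-/

open MeasureTheory
open scoped ENNReal NNReal

section PowerNonlinearity

variable {F : Type*} [NormedAddCommGroup F] [InnerProductSpace ℝ F] {c : ℝ}

noncomputable def powerNonlinearity (c : ℝ) (z : F) : F := ‖z‖ ^ c • z

theorem norm_powerNonlinearity (hc : c + 1 ≠ 0) (z : F) :
    ‖powerNonlinearity c z‖ = ‖z‖ ^ (c + 1) := by
  rw [powerNonlinearity, norm_smul, Real.norm_of_nonneg (by positivity),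
    Real.rpow_add_one' (norm_nonneg z) hc]

theorem hasFDerivAt_powerNonlinearity_zero (hc : 0 < c) :
    HasFDerivAt (powerNonlinearity c) (0 : F →L[ℝ] F) 0 := by
  refine .of_isLittleO ?_
  have hsmall : (fun h : F => ‖h‖ ^ c) =o[nhds 0] (fun _ => (1 : ℝ)) := by
    refine (Asymptotics.isLittleO_one_iff ℝ).2 ?_
    simpa [Real.zero_rpow hc.ne'] using
      (continuous_norm.rpow_const fun _ => Or.inr hc.le).tendsto (0 : F)
  simpa [powerNonlinearity] using
    hsmall.smul_isBigO (Asymptotics.isBigO_refl (fun h : F => h) _)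

theorem hasFDerivAt_powerNonlinearity_of_ne_zero {z : F} (hz : z ≠ 0) :
    HasFDerivAt (powerNonlinearity c)
      (‖z‖ ^ c • ContinuousLinearMap.id ℝ F +
        ((c * ‖z‖ ^ (c - 1)) • fderiv ℝ norm z).smulRight z) z :=
  ((((contDiffAt_norm ℝ hz).differentiableAt one_ne_zero).hasFDerivAt).rpow_const
    (Or.inl (norm_ne_zero_iff.2 hz))).smul (hasFDerivAt_id z)

theorem differentiable_powerNonlinearity (hc : 0 < c) :
    Differentiable ℝ (powerNonlinearity (F := F) c) := fun z => by
  rcases eq_or_ne z 0 with rfl | hz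
  · exact (hasFDerivAt_powerNonlinearity_zero hc).differentiableAt
  · exact (hasFDerivAt_powerNonlinearity_of_ne_zero hz).differentiableAt

theorem norm_fderiv_powerNonlinearity_le (hc : 0 < c) (z : F) :
    ‖fderiv ℝ (powerNonlinearity c) z‖ ≤ (c + 1) * ‖z‖ ^ c := by
  rcases eq_or_ne z 0 with rfl | hz
  · simp only [(hasFDerivAt_powerNonlinearity_zero hc).fderiv, norm_zero]
    positivity
  have hnorm : ‖fderiv ℝ (fun w : F => ‖w‖) z‖ ≤ 1 := by
    simpa using norm_fderiv_le_of_lipschitz ℝ (x₀ := z) (lipschitzWith_one_norm (E := F))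
  rw [(hasFDerivAt_powerNonlinearity_of_ne_zero hz).fderiv]
  calc _ ≤ ‖z‖ ^ c * 1 + (c * ‖z‖ ^ (c - 1) * 1) * ‖z‖ := by
        refine (norm_add_le _ _).trans (add_le_add ?_ ?_)
        · rw [norm_smul, Real.norm_of_nonneg (by positivity)]
          gcongr
          exact ContinuousLinearMap.norm_id_le
        · rw [ContinuousLinearMap.norm_smulRight_apply, norm_smul,
            Real.norm_of_nonneg (by positivity)]
          gcongr
    _ = (c + 1) * ‖z‖ ^ c := by
        rw [Real.rpow_sub_one (norm_ne_zero_iff.2 hz)]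
        field_simp
        ring

theorem norm_fderiv_powerNonlinearity_comp_le {E : Type*} [NormedAddCommGroup E]
    [NormedSpace ℝ E] (hc : 0 < c) {u : E → F} {x : E} (hu : DifferentiableAt ℝ u x) :
    ‖fderiv ℝ (fun y => powerNonlinearity c (u y)) x‖ ≤
      (c + 1) * (‖u x‖ ^ c * ‖fderiv ℝ u x‖) := by
  rw [fderiv_fun_comp x (differentiable_powerNonlinearity hc _) hu, ← mul_assoc]
  exact (ContinuousLinearMap.opNorm_comp_le _ _).trans
    (by gcongr; exact norm_fderiv_powerNonlinearity_le hc _)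

end PowerNonlinearity

theorem ENNReal.toReal_add_le_of_add_le {a b c : ℝ≥0∞} (h : a + b ≤ c) (hc : c ≠ ⊤) :
    a.toReal + b.toReal ≤ c.toReal := by
  rw [← ENNReal.toReal_add (ne_top_of_le_ne_top hc (le_self_add.trans h))
    (ne_top_of_le_ne_top hc (le_add_self.trans h))]
  exact ENNReal.toReal_mono hc h

section Holder

variable {α : Type*} [MeasurableSpace α] {μ : Measure α}
  {G H K : Type*} [NormedAddCommGroup G] [NormedAddCommGroup H] [NormedAddCommGroup K]

theorem eLpNorm_le_mul_eLpNorm_rpow_mul_eLpNorm {f : α → G} {g : α → H} {w : α → K}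
    {p q r : ℝ≥0∞} [ENNReal.HolderTriple p q r] {c k : ℝ} (hc : 0 < c)
    (hf : AEStronglyMeasurable f μ) (hg : AEStronglyMeasurable g μ)
    (hw : ∀ x, ‖w x‖ ≤ k * (‖f x‖ ^ c * ‖g x‖)) :
    eLpNorm w r μ ≤
      ENNReal.ofReal k * (eLpNorm f (p * ENNReal.ofReal c) μ ^ c * eLpNorm g q μ) := by
  have hfc : AEStronglyMeasurable (fun x => ‖f x‖ ^ c) μ :=
    (hf.norm.aemeasurable.pow_const c).aestronglyMeasurable
  calc eLpNorm w r μ ≤ ENNReal.ofReal k * eLpNorm (fun x => ‖f x‖ ^ c * ‖g x‖) r μ :=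
        eLpNorm_le_mul_eLpNorm_of_ae_le_mul (.of_forall fun x => by
          rw [Real.norm_of_nonneg (by positivity)]; exact hw x) r
    _ ≤ ENNReal.ofReal k * (eLpNorm (fun x => ‖f x‖ ^ c) p μ * eLpNorm g q μ) := by
        gcongr
        simpa using eLpNorm_le_eLpNorm_mul_eLpNorm'_of_norm hfc hg (fun a y => a * ‖y‖) 1
          (.of_forall fun x => by simp [norm_mul])
    _ = _ := by rw [eLpNorm_norm_rpow f hc]

theorem eLpNorm_le_eLpNorm_rpow_mul_eLpNorm_rpow {f : α → G} (hf : AEStronglyMeasurable f μ)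
    {p q r θ : ℝ} (hθ₀ : 0 < θ) (hθ₁ : θ < 1)
    (hpqr : Real.HolderTriple (p / θ) (r / (1 - θ)) q) :
    eLpNorm f (.ofReal q) μ ≤
      eLpNorm f (.ofReal p) μ ^ θ * eLpNorm f (.ofReal r) μ ^ (1 - θ) := by
  have : ENNReal.HolderTriple (.ofReal (p / θ)) (.ofReal (r / (1 - θ))) (.ofReal q) :=
    hpqr.ennrealOfReal
  have hθ' : 0 < 1 - θ := sub_pos.2 hθ₁
  have key := eLpNorm_le_mul_eLpNorm_rpow_mul_eLpNorm (μ := μ) (w := f) (k := 1)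
    (p := .ofReal (p / θ)) (q := .ofReal (r / (1 - θ))) (r := .ofReal q)
    (g := fun x => ‖f x‖ ^ (1 - θ)) hθ₀ hf
    (hf.norm.aemeasurable.pow_const _).aestronglyMeasurable fun x => by
      rw [Real.norm_of_nonneg (by positivity), one_mul,
        ← Real.rpow_add' (norm_nonneg _) (by norm_num), add_sub_cancel, Real.rpow_one]
  rwa [eLpNorm_norm_rpow f hθ', ENNReal.ofReal_one, one_mul, ← ENNReal.ofReal_mul hpqr.nonneg,
    ← ENNReal.ofReal_mul hpqr.symm.nonneg, div_mul_cancel₀ _ hθ₀.ne',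
    div_mul_cancel₀ _ hθ'.ne'] at key

theorem eLpNorm_le_eLpNorm_add_eLpNorm_of_le_of_le {f : α → G} (hf : AEStronglyMeasurable f μ)
    {p q r : ℝ} (hp : 0 < p) (hpq : p ≤ q) (hqr : q ≤ r) :
    eLpNorm f (.ofReal q) μ ≤ eLpNorm f (.ofReal p) μ + eLpNorm f (.ofReal r) μ := by
  rcases hpq.eq_or_lt with rfl | hpq
  · exact le_self_add
  rcases hqr.eq_or_lt with rfl | hqr
  · exact le_add_self
  set θ := (q⁻¹ - r⁻¹) / (p⁻¹ - r⁻¹)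
  have hq : 0 < q := hp.trans hpq
  have hr : 0 < r := hq.trans hqr
  have hpr : 0 < p⁻¹ - r⁻¹ := sub_pos.2 (inv_strictAnti₀ hp (hpq.trans hqr))
  have hθ₀ : 0 < θ := div_pos (sub_pos.2 (inv_strictAnti₀ hq hqr)) hpr
  have hθ₁ : θ < 1 := (div_lt_one hpr).2 (sub_lt_sub_right (inv_strictAnti₀ hp hpq) _)
  have hθ' : 0 < 1 - θ := sub_pos.2 hθ₁
  have hθ : θ * (p⁻¹ - r⁻¹) = q⁻¹ - r⁻¹ := div_mul_cancel₀ _ hpr.ne'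
  have hpqr : Real.HolderTriple (p / θ) (r / (1 - θ)) q :=
    ⟨by rw [inv_div, inv_div, div_eq_mul_inv, div_eq_mul_inv]; linear_combination hθ,
      by positivity, by positivity⟩
  set S := eLpNorm f (.ofReal p) μ + eLpNorm f (.ofReal r) μ
  calc eLpNorm f (.ofReal q) μ
      ≤ eLpNorm f (.ofReal p) μ ^ θ * eLpNorm f (.ofReal r) μ ^ (1 - θ) :=
        eLpNorm_le_eLpNorm_rpow_mul_eLpNorm_rpow hf hθ₀ hθ₁ hpqr
    _ ≤ S ^ θ * S ^ (1 - θ) := by gcongr; exacts [le_self_add, le_add_self]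
    _ = S := by rw [← ENNReal.rpow_add_of_nonneg _ _ hθ₀.le hθ'.le, add_sub_cancel,
      ENNReal.rpow_one]

end Holder

section H1Norm

variable {E : Type*} [NormedAddCommGroup E] [NormedSpace ℝ E] [MeasurableSpace E]
  {F : Type*} [NormedAddCommGroup F] [NormedSpace ℝ F]

noncomputable def h1Norm (μ : Measure E) (u : E → F) : ℝ≥0∞ :=
  eLpNorm u 2 μ + eLpNorm (fderiv ℝ u) 2 μ

variable [OpensMeasurableSpace E] (μ : Measure E) [IsFiniteMeasureOnCompacts μ] {u : E → F}

theorem h1Norm_ne_top (hu : ContDiff ℝ 1 u) (h2u : HasCompactSupport u) : h1Norm μ u ≠ ⊤ :=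
  ENNReal.add_ne_top.2 ⟨(hu.continuous.memLp_of_hasCompactSupport h2u).eLpNorm_ne_top,
    ((hu.continuous_fderiv one_ne_zero).memLp_of_hasCompactSupport
      (h2u.fderiv (𝕜 := ℝ))).eLpNorm_ne_top⟩

theorem toReal_h1Norm (hu : ContDiff ℝ 1 u) (h2u : HasCompactSupport u) :
    (h1Norm μ u).toReal = (eLpNorm u 2 μ).toReal + (eLpNorm (fderiv ℝ u) 2 μ).toReal :=
  ENNReal.toReal_add (ENNReal.add_ne_top.1 (h1Norm_ne_top μ hu h2u)).1
    (ENNReal.add_ne_top.1 (h1Norm_ne_top μ hu h2u)).2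

end H1Norm

section Sobolev

open Module

variable {E : Type*} [NormedAddCommGroup E] [NormedSpace ℝ E] [MeasurableSpace E] [BorelSpace E]
  [FiniteDimensional ℝ E] (μ : Measure E) [μ.IsAddHaarMeasure]
  {F : Type*} [NormedAddCommGroup F] [InnerProductSpace ℝ F]

theorem eLpNorm_rpow_add_one_le_of_finrank_eq_two (hE : finrank ℝ E = 2) {c : ℝ} (hc : 0 < c)
    {u : E → F} (hu : ContDiff ℝ 1 u) (h2u : HasCompactSupport u) :
    eLpNorm u (.ofReal (2 * (c + 1))) μ ^ (c + 1) ≤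
      eLpNormLESNormFDerivOneConst μ 2 * ENNReal.ofReal (c + 1) *
        (eLpNorm u (.ofReal (2 * c)) μ ^ c * eLpNorm (fderiv ℝ u) 2 μ) := by
  have hc₁ : 1 < c + 1 := by linarith
  have h2 : NNReal.HolderConjugate (finrank ℝ E) 2 := by
    rw [hE]; exact NNReal.HolderConjugate.two_two
  have hv : ContDiff ℝ 1 fun x => ‖u x‖ ^ (c + 1) := hu.norm_rpow hc₁
  have hv₀ : HasCompactSupport fun x => ‖u x‖ ^ (c + 1) :=
    h2u.comp_left (g := fun z : F => ‖z‖ ^ (c + 1))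
      (by simp [Real.zero_rpow (by linarith : c + 1 ≠ 0)])
  have hDv : ∀ x, ‖fderiv ℝ (fun x => ‖u x‖ ^ (c + 1)) x‖ ≤
      (c + 1) * (‖u x‖ ^ c * ‖fderiv ℝ u x‖) := fun x => by
    simpa [mul_assoc] using norm_fderiv_norm_rpow_le (hu.differentiable one_ne_zero) hc₁ (x := x)
  have hholder := eLpNorm_le_mul_eLpNorm_rpow_mul_eLpNorm (μ := μ) (p := 2) (q := 2) (r := 1) hc
    hu.continuous.aestronglyMeasurable (hu.continuous_fderiv one_ne_zero).aestronglyMeasurable hDv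
  calc eLpNorm u (.ofReal (2 * (c + 1))) μ ^ (c + 1)
      = eLpNorm (fun x => ‖u x‖ ^ (c + 1)) 2 μ := by
        rw [eLpNorm_norm_rpow u (by linarith), ← ENNReal.ofReal_ofNat 2,
          ← ENNReal.ofReal_mul zero_le_two]
    _ ≤ eLpNormLESNormFDerivOneConst μ 2 *
          eLpNorm (fderiv ℝ fun x => ‖u x‖ ^ (c + 1)) 1 μ := by
        exact_mod_cast eLpNorm_le_eLpNorm_fderiv_one μ hv hv₀ h2
    _ ≤ _ := by
        rw [mul_assoc]
        gcongr
        rwa [← ENNReal.ofReal_ofNat 2, ← ENNReal.ofReal_mul zero_le_two,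
          ENNReal.ofReal_ofNat] at hholder

theorem exists_eLpNorm_two_mul_nat_succ_le_mul_h1Norm (hE : finrank ℝ E = 2) (n : ℕ) :
    ∃ C : ℝ≥0, ∀ u : E → F, ContDiff ℝ 1 u → HasCompactSupport u →
      eLpNorm u (.ofReal (2 * (n + 1))) μ ≤ C * h1Norm μ u := by
  induction n with
  | zero => exact ⟨1, fun u _ _ => by simp [h1Norm]⟩
  | succ n ih =>
    obtain ⟨C, hC⟩ := ih
    set c : ℝ := n + 1
    have hc : 0 < c := by positivity
    set K : ℝ≥0 := eLpNormLESNormFDerivOneConst μ 2 * (c + 1).toNNReal * C ^ c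
    refine ⟨K ^ (c + 1)⁻¹, fun u hu h2u => ?_⟩
    have hpow : eLpNorm u (.ofReal (2 * (c + 1))) μ ^ (c + 1) ≤ K * h1Norm μ u ^ (c + 1) :=
      calc eLpNorm u (.ofReal (2 * (c + 1))) μ ^ (c + 1)
          ≤ eLpNormLESNormFDerivOneConst μ 2 * ENNReal.ofReal (c + 1) *
              (eLpNorm u (.ofReal (2 * c)) μ ^ c * eLpNorm (fderiv ℝ u) 2 μ) :=
            eLpNorm_rpow_add_one_le_of_finrank_eq_two μ hE hc hu h2u
        _ ≤ eLpNormLESNormFDerivOneConst μ 2 * ENNReal.ofReal (c + 1) *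
              ((C * h1Norm μ u) ^ c * h1Norm μ u) := by
            gcongr
            exacts [hC u hu h2u, le_add_self]
        _ = K * h1Norm μ u ^ (c + 1) := by
            simp only [K, ENNReal.coe_mul, ENNReal.coe_rpow_of_nonneg _ hc.le,
              ENNReal.mul_rpow_of_nonneg _ _ hc.le,
              ENNReal.rpow_add_of_nonneg _ _ hc.le zero_le_one, ENNReal.rpow_one]
            rw [ENNReal.ofReal]
            ring
    have hc₁ : 0 < c + 1 := by positivity
    rw [show 2 * (((n + 1 : ℕ) : ℝ) + 1) = 2 * (c + 1) by push_cast; ring,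
      ← ENNReal.rpow_le_rpow_iff hc₁, ENNReal.mul_rpow_of_nonneg _ _ hc₁.le,
      ENNReal.coe_rpow_of_nonneg _ (by positivity), ← ENNReal.rpow_mul,
      inv_mul_cancel₀ hc₁.ne', ENNReal.rpow_one]
    exact hpow

theorem exists_eLpNorm_le_mul_h1Norm (hE : finrank ℝ E = 2) {q : ℝ} (hq : 2 ≤ q) :
    ∃ C : ℝ≥0, ∀ u : E → F, ContDiff ℝ 1 u → HasCompactSupport u →
      eLpNorm u (.ofReal q) μ ≤ C * h1Norm μ u := by
  obtain ⟨n, hn⟩ := exists_nat_ge (q / 2)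
  obtain ⟨C, hC⟩ := exists_eLpNorm_two_mul_nat_succ_le_mul_h1Norm (F := F) μ hE n
  refine ⟨1 + C, fun u hu h2u => ?_⟩
  calc eLpNorm u (.ofReal q) μ
      ≤ eLpNorm u (.ofReal 2) μ + eLpNorm u (.ofReal (2 * (n + 1))) μ :=
        eLpNorm_le_eLpNorm_add_eLpNorm_of_le_of_le hu.continuous.aestronglyMeasurable two_pos hq
          (by linarith)
    _ ≤ 1 * h1Norm μ u + C * h1Norm μ u := by
        gcongr
        · simp [h1Norm]
        · exact hC u hu h2u
    _ = (1 + C) * h1Norm μ u := (add_mul _ _ _).symm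

theorem exists_eLpNorm_powerNonlinearity_add_le (hE : finrank ℝ E = 2) {c p a : ℝ} (hc : 0 < c)
    (hpa : Real.HolderTriple a 2 p) (hp : 2 ≤ p * (c + 1)) (ha : 2 ≤ a * c) :
    ∃ C : ℝ≥0, ∀ u : E → F, ContDiff ℝ 1 u → HasCompactSupport u →
      eLpNorm (fun x => powerNonlinearity c (u x)) (.ofReal p) μ +
          eLpNorm (fderiv ℝ fun x => powerNonlinearity c (u x)) (.ofReal p) μ ≤
        C * h1Norm μ u ^ (c + 1) := by
  obtain ⟨C₁, hC₁⟩ := exists_eLpNorm_le_mul_h1Norm (F := F) μ hE hp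
  obtain ⟨C₂, hC₂⟩ := exists_eLpNorm_le_mul_h1Norm (F := F) μ hE ha
  have : ENNReal.HolderTriple (.ofReal a) 2 (.ofReal p) := by simpa using hpa.ennrealOfReal
  have hc₁ : 0 < c + 1 := by positivity
  refine ⟨C₁ ^ (c + 1) + (c + 1).toNNReal * C₂ ^ c, fun u hu h2u => ?_⟩
  have hF : eLpNorm (fun x => powerNonlinearity c (u x)) (.ofReal p) μ ≤
      C₁ ^ (c + 1) * h1Norm μ u ^ (c + 1) :=
    calc _ = eLpNorm (fun x => ‖u x‖ ^ (c + 1)) (.ofReal p) μ :=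
          eLpNorm_congr_norm_ae (.of_forall fun x => by
            rw [norm_powerNonlinearity hc₁.ne', Real.norm_of_nonneg (by positivity)])
      _ = eLpNorm u (.ofReal (p * (c + 1))) μ ^ (c + 1) := by
          rw [eLpNorm_norm_rpow u hc₁, ← ENNReal.ofReal_mul hpa.pos'.le]
      _ ≤ (C₁ * h1Norm μ u) ^ (c + 1) := by gcongr; exact hC₁ u hu h2u
      _ = _ := by
          rw [ENNReal.mul_rpow_of_nonneg _ _ hc₁.le]
  have hDF : eLpNorm (fderiv ℝ fun x => powerNonlinearity c (u x)) (.ofReal p) μ ≤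
      (c + 1).toNNReal * C₂ ^ c * h1Norm μ u ^ (c + 1) :=
    calc _ ≤ ENNReal.ofReal (c + 1) *
            (eLpNorm u (.ofReal a * .ofReal c) μ ^ c * eLpNorm (fderiv ℝ u) 2 μ) :=
          eLpNorm_le_mul_eLpNorm_rpow_mul_eLpNorm hc hu.continuous.aestronglyMeasurable
            (hu.continuous_fderiv one_ne_zero).aestronglyMeasurable fun x =>
              norm_fderiv_powerNonlinearity_comp_le hc (hu.differentiable one_ne_zero x)
      _ ≤ ENNReal.ofReal (c + 1) * ((C₂ * h1Norm μ u) ^ c * h1Norm μ u) := by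
          rw [← ENNReal.ofReal_mul hpa.pos.le]
          gcongr
          exacts [hC₂ u hu h2u, le_add_self]
      _ = _ := by
          rw [ENNReal.mul_rpow_of_nonneg _ _ hc.le,
            ENNReal.rpow_add_of_nonneg _ _ hc.le zero_le_one, ENNReal.rpow_one, ENNReal.ofReal]
          ring
  calc _ ≤ _ := add_le_add hF hDF
    _ = _ := by
        simp only [ENNReal.coe_add, ENNReal.coe_mul, ENNReal.coe_rpow_of_nonneg _ hc.le,
          ENNReal.coe_rpow_of_nonneg _ hc₁.le]
        ring

end Sobolev

/-- Estimate of the power nonlinearity F(u) = |u|^(2σ)u in H^{1,p}(ℝ²). -/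
theorem stmt11 (σ : ℝ) (hσ : 0 < σ) (p : ℝ)
    (hp : p = if σ < 1 / 2 then 2 / (2 * σ + 1) else 4 / 3) :
    ∃ C > (0 : ℝ), ∀ u : EuclideanSpace ℝ (Fin 2) → ℂ,
      ContDiff ℝ 1 u → HasCompactSupport u →
      (eLpNorm (fun x => ((‖u x‖ ^ (2 * σ) : ℝ) : ℂ) * u x)
          (ENNReal.ofReal p) volume).toReal +
        (eLpNorm (fun x =>
            ‖fderiv ℝ (fun y => ((‖u y‖ ^ (2 * σ) : ℝ) : ℂ) * u y) x‖)
          (ENNReal.ofReal p) volume).toReal ≤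
      C * ((eLpNorm u 2 volume).toReal +
            (eLpNorm (fun x => ‖fderiv ℝ u x‖) 2 volume).toReal) ^ (2 * σ + 1) := by
  obtain ⟨a, hpa, hp₂, ha₂⟩ :
      ∃ a, Real.HolderTriple a 2 p ∧ 2 ≤ p * (2 * σ + 1) ∧ 2 ≤ a * (2 * σ) := by
    split_ifs at hp with h <;> subst hp
    · exact ⟨1 / σ, ⟨by field_simp, by positivity, two_pos⟩, le_of_eq (by field_simp),
        le_of_eq (by field_simp)⟩
    · exact ⟨4, ⟨by norm_num, by norm_num, two_pos⟩, by linarith, by linarith⟩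
  obtain ⟨C, hC⟩ := exists_eLpNorm_powerNonlinearity_add_le (F := ℂ) volume
    finrank_euclideanSpace_fin (by positivity) hpa hp₂ ha₂
  refine ⟨C + 1, by positivity, fun u hu h2u => ?_⟩
  simp_rw [← Complex.real_smul, eLpNorm_norm]
  calc _ ≤ ((C : ℝ≥0∞) * h1Norm volume u ^ (2 * σ + 1)).toReal :=
        ENNReal.toReal_add_le_of_add_le (hC u hu h2u)
          (by have := h1Norm_ne_top volume hu h2u; finiteness)
    _ = C * ((eLpNorm u 2 volume).toReal + (eLpNorm (fderiv ℝ u) 2 volume).toReal) ^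
          (2 * σ + 1) := by
        rw [ENNReal.toReal_mul, ← ENNReal.toReal_rpow, ENNReal.coe_toReal,
          toReal_h1Norm volume hu h2u]
    _ ≤ _ := by gcongr; simp
end

section
/- Let 0 < σ ≤ 3/2 and set p = 6/(2σ+3). Then there exists a constant C > 0 such that for every continuously differentiable function u : ℝ³ → ℂ with compact support, writing F(u)(x) = |u(x)|^{2σ} u(x), one has ‖F(u)‖_{L^p} + ‖∇(F(u))‖_{L^p} ≤ C ( ‖u‖_{L²} + ‖∇u‖_{L²} )^{2σ+1}. -/
/-!
Write `r = 2σ`. The nonlinearity `z ↦ ‖z‖ ^ r • z` is differentiable everywhere (at `0` its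
derivative vanishes since `r > 0`) with derivative of norm at most `(r + 1) ‖z‖ ^ r`, so `F(u)` and
`∇F(u)` are pointwise bounded by `|u| ^ r |u|` and `(r + 1) |u| ^ r |∇u|`. Since
`1/p = σ/3 + 1/2`, Hölder's inequality bounds both in `L^p` by `‖|u| ^ r‖_{3/σ} = ‖u‖_6 ^ r` times
`‖u‖_2`, resp. `‖∇u‖_2`, and the Gagliardo–Nirenberg–Sobolev inequality `‖u‖_6 ≤ C ‖∇u‖_2` on
`ℝ³` finishes the estimate.
-/

open MeasureTheory Asymptotics Topology
open scoped ENNReal NNReal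

section PowerNonlinearity

variable {E : Type*} [NormedAddCommGroup E] [InnerProductSpace ℝ E]

theorem hasFDerivAt_norm_rpow_of_ne_zero {x : E} (hx : x ≠ 0) (p : ℝ) :
    HasFDerivAt (fun x : E ↦ ‖x‖ ^ p) ((p * ‖x‖ ^ (p - 2)) • innerSL ℝ x) x := by
  -- `‖x‖ ^ p = (‖x‖ ^ 2) ^ (p / 2)`, and `‖x‖ ^ 2` is smooth with nonzero value at `x`
  convert! ((hasStrictFDerivAt_norm_sq x).rpow_const (p := p / 2) (by simp [hx])).hasFDerivAt
    using 0
  simp_rw [← Real.rpow_natCast_mul (norm_nonneg _), ← Nat.cast_smul_eq_nsmul ℝ, smul_smul]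
  ring_nf

theorem hasFDerivAt_norm_rpow_smul_self_zero {r : ℝ} (hr : 0 < r) :
    HasFDerivAt (fun w : E ↦ ‖w‖ ^ r • w) (0 : E →L[ℝ] E) 0 := by
  refine .of_isLittleO ?_
  simp only [norm_zero, smul_zero, sub_zero, zero_apply]
  have hsmall : (fun w : E ↦ ‖w‖ ^ r) =o[𝓝 0] (fun _ ↦ (1 : ℝ)) := by
    refine (isLittleO_const_iff one_ne_zero).mpr ?_
    convert! continuousAt_id.norm.rpow_const (.inr hr.le) |>.tendsto
    simp [hr.ne']
  simpa using hsmall.smul_isBigO (isBigO_refl (fun w : E ↦ w) (𝓝 0))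

theorem exists_hasFDerivAt_norm_rpow_smul_self {r : ℝ} (hr : 0 < r) (z : E) :
    ∃ L : E →L[ℝ] E, HasFDerivAt (fun w : E ↦ ‖w‖ ^ r • w) L z ∧ ‖L‖ ≤ (r + 1) * ‖z‖ ^ r := by
  rcases eq_or_ne z 0 with rfl | hz
  · exact ⟨0, hasFDerivAt_norm_rpow_smul_self_zero hr, by simp [Real.zero_rpow hr.ne']⟩
  refine ⟨_, (hasFDerivAt_norm_rpow_of_ne_zero hz r).smul (hasFDerivAt_id z), ?_⟩
  have hz' : 0 < ‖z‖ := norm_pos_iff.mpr hz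
  have hpow : ‖z‖ ^ (r - 2) * ‖z‖ * ‖z‖ = ‖z‖ ^ r := by
    rw [← Real.rpow_add_one hz'.ne', ← Real.rpow_add_one hz'.ne']
    ring_nf
  calc _ ≤ ‖z‖ ^ r * ‖ContinuousLinearMap.id ℝ E‖ + r * (‖z‖ ^ (r - 2) * ‖z‖ * ‖z‖) := by
        refine (norm_add_le _ _).trans_eq ?_
        rw [norm_smul, ContinuousLinearMap.norm_smulRight_apply, norm_smul, innerSL_apply_norm,
          Real.norm_of_nonneg (by positivity), Real.norm_of_nonneg (by positivity)]
        ring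
    _ ≤ ‖z‖ ^ r * 1 + r * ‖z‖ ^ r := by
        rw [hpow]
        gcongr
        exact ContinuousLinearMap.norm_id_le
    _ = (r + 1) * ‖z‖ ^ r := by ring

variable {G : Type*} [NormedAddCommGroup G] [NormedSpace ℝ G]

theorem norm_fderiv_norm_rpow_smul_le {f : G → E} {x : G} (hf : DifferentiableAt ℝ f x)
    {r : ℝ} (hr : 0 < r) :
    ‖fderiv ℝ (fun y ↦ ‖f y‖ ^ r • f y) x‖ ≤ (r + 1) * ‖f x‖ ^ r * ‖fderiv ℝ f x‖ := by
  obtain ⟨L, hL, hL_norm⟩ := exists_hasFDerivAt_norm_rpow_smul_self hr (f x)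
  have hcomp : HasFDerivAt (fun y ↦ ‖f y‖ ^ r • f y) (L.comp (fderiv ℝ f x)) x :=
    hL.comp x hf.hasFDerivAt
  rw [hcomp.fderiv]
  exact (L.opNorm_comp_le _).trans (by gcongr)

end PowerNonlinearity

section Sobolev

open Module

variable {D : Type*} [NormedAddCommGroup D] [NormedSpace ℝ D] [MeasurableSpace D] [BorelSpace D]
  [FiniteDimensional ℝ D] (μ : Measure D) [μ.IsAddHaarMeasure]
  {E : Type*} [NormedAddCommGroup E] [InnerProductSpace ℝ E]

theorem eLpNorm_norm_rpow_smul_add_eLpNorm_fderiv_le {r : ℝ} (hr : 0 < r) {p p' : ℝ≥0}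
    (hp : 1 ≤ p) (hn : 0 < finrank ℝ D) (hp' : (p' : ℝ)⁻¹ = p⁻¹ - (finrank ℝ D : ℝ)⁻¹)
    {q s : ℝ≥0∞} (hs : s * ENNReal.ofReal r = p') [ENNReal.HolderTriple s p q]
    {u : D → E} (hu : ContDiff ℝ 1 u) (h2u : HasCompactSupport u) :
    eLpNorm (fun x ↦ ‖u x‖ ^ r • u x) q μ + eLpNorm (fderiv ℝ fun x ↦ ‖u x‖ ^ r • u x) q μ ≤
      (eLpNormLESNormFDerivOfEqInnerConst μ p : ℝ≥0∞) ^ r * ENNReal.ofReal (r + 1) *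
        (eLpNorm u p μ + eLpNorm (fderiv ℝ u) p μ) ^ (r + 1) := by
  set K := ((eLpNormLESNormFDerivOfEqInnerConst μ p : ℝ≥0) : ℝ≥0∞)
  set M := eLpNorm u p μ + eLpNorm (fderiv ℝ u) p μ
  set c := ENNReal.ofReal (r + 1)
  have hpow_meas : AEStronglyMeasurable (fun x ↦ ‖u x‖ ^ r) μ :=
    (hu.continuous.norm.rpow_const fun _ ↦ .inr hr.le).aestronglyMeasurable
  have hpow : eLpNorm (fun x ↦ ‖u x‖ ^ r) s μ ≤ (K * M) ^ r := by
    rw [eLpNorm_norm_rpow u hr, hs]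
    gcongr
    exact (eLpNorm_le_eLpNorm_fderiv_of_eq_inner μ hu h2u hp hn hp').trans
      (by gcongr; exact le_add_self)
  have hF : eLpNorm (fun x ↦ ‖u x‖ ^ r • u x) q μ ≤ (K * M) ^ r * eLpNorm u p μ :=
    (eLpNorm_smul_le_mul_eLpNorm hu.continuous.aestronglyMeasurable hpow_meas).trans
      (by gcongr)
  have hDF : eLpNorm (fderiv ℝ fun x ↦ ‖u x‖ ^ r • u x) q μ ≤
      c * ((K * M) ^ r * eLpNorm (fderiv ℝ u) p μ) := by
    calc _ ≤ eLpNorm ((r + 1) • (fun x ↦ ‖u x‖ ^ r) • fderiv ℝ u) q μ := by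
          refine eLpNorm_mono fun x ↦ ?_
          rw [Pi.smul_apply, Pi.smul_apply', norm_smul, norm_smul, Real.norm_of_nonneg
            (by positivity : 0 ≤ r + 1), Real.norm_of_nonneg (by positivity), ← mul_assoc]
          exact norm_fderiv_norm_rpow_smul_le (hu.differentiable one_ne_zero x) hr
      _ = c * eLpNorm ((fun x ↦ ‖u x‖ ^ r) • fderiv ℝ u) q μ := by
          rw [eLpNorm_const_smul (r + 1 : ℝ) ((fun x ↦ ‖u x‖ ^ r) • fderiv ℝ u),
            Real.enorm_of_nonneg (by positivity)]
      _ ≤ c * ((K * M) ^ r * eLpNorm (fderiv ℝ u) p μ) := by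
          gcongr
          exact (eLpNorm_smul_le_mul_eLpNorm
            (hu.continuous_fderiv one_ne_zero).aestronglyMeasurable hpow_meas).trans (by gcongr)
  have hc : 1 ≤ c := by simp [c, ENNReal.one_le_ofReal, hr.le]
  calc _ ≤ (K * M) ^ r * eLpNorm u p μ + c * ((K * M) ^ r * eLpNorm (fderiv ℝ u) p μ) :=
        add_le_add hF hDF
    _ ≤ c * ((K * M) ^ r * eLpNorm u p μ) + c * ((K * M) ^ r * eLpNorm (fderiv ℝ u) p μ) := by
        gcongr ?_ + _
        exact le_mul_of_one_le_left' hc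
    _ = K ^ r * c * M ^ (r + 1) := by
        rw [ENNReal.mul_rpow_of_nonneg _ _ hr.le, ENNReal.rpow_add_of_nonneg _ _ hr.le zero_le_one,
          ENNReal.rpow_one]
        ring

end Sobolev

theorem ENNReal.toReal_add_le_mul_add_rpow {a b c d e : ℝ≥0∞} {t : ℝ} (ht : 0 ≤ t) (hc : c ≠ ⊤)
    (hd : d ≠ ⊤) (he : e ≠ ⊤) (h : a + b ≤ c * (d + e) ^ t) :
    a.toReal + b.toReal ≤ c.toReal * (d.toReal + e.toReal) ^ t := by
  have hfin : c * (d + e) ^ t ≠ ⊤ := by finiteness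
  obtain ⟨ha, hb⟩ := ENNReal.add_ne_top.1 (ne_top_of_le_ne_top hfin h)
  rw [← ENNReal.toReal_add ha hb, ← ENNReal.toReal_add hd he, ENNReal.toReal_rpow,
    ← ENNReal.toReal_mul]
  exact ENNReal.toReal_mono hfin h

theorem holderTriple_ofReal_three_div {σ : ℝ} (hσ : 0 < σ) :
    ENNReal.HolderTriple (ENNReal.ofReal (3 / σ)) 2 (ENNReal.ofReal (6 / (2 * σ + 3))) where
  inv_add_inv_eq_inv := by
    rw [← ENNReal.ofReal_inv_of_pos (by positivity), ← ENNReal.ofReal_inv_of_pos (by positivity),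
      ← ENNReal.ofReal_ofNat 2, ← ENNReal.ofReal_inv_of_pos two_pos,
      ← ENNReal.ofReal_add (by positivity) (by positivity)]
    congr 1
    field_simp
    ring

theorem ofReal_three_div_mul_ofReal_two_mul {σ : ℝ} (hσ : 0 < σ) :
    ENNReal.ofReal (3 / σ) * ENNReal.ofReal (2 * σ) = ((6 : ℝ≥0) : ℝ≥0∞) := by
  rw [← ENNReal.ofReal_mul (by positivity), show 3 / σ * (2 * σ) = 6 by field_simp; norm_num]
  norm_num

theorem stmt12_general (σ : ℝ) (hσ1 : 0 < σ) (p : ℝ)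
    (hp : p = 6 / (2 * σ + 3)) :
    ∃ C > (0 : ℝ), ∀ u : EuclideanSpace ℝ (Fin 3) → ℂ,
      ContDiff ℝ 1 u → HasCompactSupport u →
      (eLpNorm (fun x => ((‖u x‖ ^ (2 * σ) : ℝ) : ℂ) * u x)
          (ENNReal.ofReal p) volume).toReal +
        (eLpNorm (fun x =>
            ‖fderiv ℝ (fun y => ((‖u y‖ ^ (2 * σ) : ℝ) : ℂ) * u y) x‖)
          (ENNReal.ofReal p) volume).toReal ≤
      C * ((eLpNorm u 2 volume).toReal +
            (eLpNorm (fun x => ‖fderiv ℝ u x‖) 2 volume).toReal) ^ (2 * σ + 1) := by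
  subst hp
  have hHolder : ENNReal.HolderTriple (ENNReal.ofReal (3 / σ)) (2 : ℝ≥0)
      (ENNReal.ofReal (6 / (2 * σ + 3))) :=
    holderTriple_ofReal_three_div hσ1
  set R := ((eLpNormLESNormFDerivOfEqInnerConst (volume : Measure (EuclideanSpace ℝ (Fin 3)))
    2 : ℝ≥0) : ℝ≥0∞) ^ (2 * σ) * ENNReal.ofReal (2 * σ + 1)
  refine ⟨R.toReal + 1, by positivity, fun u hu h2u ↦ ?_⟩
  have hF := eLpNorm_norm_rpow_smul_add_eLpNorm_fderiv_le volume (by positivity) (p' := 6)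
    (q := ENNReal.ofReal (6 / (2 * σ + 3)))
    one_le_two (by simp) (by simp; norm_num) (ofReal_three_div_mul_ofReal_two_mul hσ1) hu h2u
  have hu2 : eLpNorm u 2 volume ≠ ⊤ :=
    (hu.continuous.memLp_of_hasCompactSupport h2u).eLpNorm_ne_top
  have hDu2 : eLpNorm (fderiv ℝ u) 2 volume ≠ ⊤ :=
    ((hu.continuous_fderiv one_ne_zero).memLp_of_hasCompactSupport
      (h2u.fderiv (𝕜 := ℝ))).eLpNorm_ne_top
  simp only [← Complex.real_smul, eLpNorm_norm]
  push_cast at hF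
  refine (ENNReal.toReal_add_le_mul_add_rpow (by positivity) (by finiteness) hu2 hDu2 hF).trans ?_
  gcongr
  linarith

/-- Estimate of the power nonlinearity F(u) = |u|^(2σ)u in H^{1,p}(ℝ³) with p = 6/(2σ+3). -/
theorem stmt12 (σ : ℝ) (hσ1 : 0 < σ) (hσ2 : σ ≤ 3 / 2) (p : ℝ)
    (hp : p = 6 / (2 * σ + 3)) :
    ∃ C > (0 : ℝ), ∀ u : EuclideanSpace ℝ (Fin 3) → ℂ,
      ContDiff ℝ 1 u → HasCompactSupport u →
      (eLpNorm (fun x => ((‖u x‖ ^ (2 * σ) : ℝ) : ℂ) * u x)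
          (ENNReal.ofReal p) volume).toReal +
        (eLpNorm (fun x =>
            ‖fderiv ℝ (fun y => ((‖u y‖ ^ (2 * σ) : ℝ) : ℂ) * u y) x‖)
          (ENNReal.ofReal p) volume).toReal ≤
      C * ((eLpNorm u 2 volume).toReal +
            (eLpNorm (fun x => ‖fderiv ℝ u x‖) 2 volume).toReal) ^ (2 * σ + 1) :=
  stmt12_general σ hσ1 p hp
end
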